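/- arXiv:1306.3298 — 2 statements merged into one kernel-verified Lean document; each statement's English description precedes it below -/
import Mathlib

section
/- Let S be a closed subset of a topological space X such that the isolated points of S are dense in S. Let f be a map for which preimage sets f^{-k}(·) are defined, and set J₂ = ⋃_{k≥0} f^{-k}({x ∈ S : x isolated in S}). Then the closure of ⋃_{k≥0} f^{-k}(S) equals the closure of J₂, provided f is continuous and open so that preimages of closure points are approximated by preimages of isolated points. -/
open Set Filter Topology

/-- if `S` is closed and its isolated points are dense in `S`, and
`f` is continuous and open on `Ω = X \ S`, then the closure of `⋃_{k≥0} f⁻ᵏ(S)`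
equals the closure of `⋃_{k≥0} f⁻ᵏ(Isol(S))`, where `Isol(S)` is the set of isolated
points of `S` and `f⁻ᵏ(·)` keeps track of the domain of definition of `f^k`. -/
theorem stmt8 {X : Type*} [TopologicalSpace X] (S : Set X) (hScl : IsClosed S)
    (Isol : Set X)
    (hIsol : Isol = {x | x ∈ S ∧ ∃ U : Set X, IsOpen U ∧ U ∩ S = {x}})
    (hdense : S ⊆ closure Isol)
    (f : X → X) (hf : ContinuousOn f Sᶜ)
    (hopen : ∀ U ⊆ Sᶜ, IsOpen U → IsOpen (f '' U)) :
    closure (⋃ k : ℕ, {x | (∀ j < k, f^[j] x ∈ Sᶜ) ∧ f^[k] x ∈ S})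
      = closure (⋃ k : ℕ, {x | (∀ j < k, f^[j] x ∈ Sᶜ) ∧ f^[k] x ∈ Isol}) := by
  have hIS : Isol ⊆ S := by
    intro x hx; rw [hIsol] at hx; exact hx.1
  set W : ℕ → Set X := fun k => {x | ∀ j < k, f^[j] x ∈ Sᶜ} with hW
  -- key induction: W k is open, f^[k] is continuous on W k, and images of open subsets are open
  have key : ∀ k : ℕ, IsOpen (W k) ∧ ContinuousOn (f^[k]) (W k) ∧
      ∀ V : Set X, IsOpen V → V ⊆ W k → IsOpen (f^[k] '' V) := by
    intro k
    induction k with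
    | zero =>
      refine ⟨?_, ?_, ?_⟩
      · convert isOpen_univ using 1
        ext x; simp [hW]
      · simpa using continuousOn_id
      · intro V hV _; simpa using hV
    | succ k ih =>
      obtain ⟨hWo, hWc, hWi⟩ := ih
      have hsub : W (k + 1) ⊆ W k := by
        intro x hx j hj; exact hx j (hj.trans (Nat.lt_succ_self k))
      have hWeq : W (k + 1) = W k ∩ (f^[k]) ⁻¹' Sᶜ := by
        ext x
        constructor
        · intro hx
          exact ⟨hsub hx, hx k (Nat.lt_succ_self k)⟩
        · intro ⟨h1, h2⟩ j hj
          rcases Nat.lt_succ_iff_lt_or_eq.mp hj with h | h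
          · exact h1 j h
          · subst h; exact h2
      have hWo' : IsOpen (W (k + 1)) := by
        rw [hWeq]
        exact hWc.isOpen_inter_preimage hWo hScl.isOpen_compl
      refine ⟨hWo', ?_, ?_⟩
      · have : ContinuousOn (f ∘ f^[k]) (W (k + 1)) := by
          apply hf.comp (hWc.mono hsub)
          intro x hx
          exact hx k (Nat.lt_succ_self k)
        rw [Function.iterate_succ']
        exact this
      · intro V hV hVsub
        have him : f^[k] '' V ⊆ Sᶜ := by
          rintro _ ⟨x, hx, rfl⟩
          exact hVsub hx k (Nat.lt_succ_self k)
        have h1 : IsOpen (f^[k] '' V) := hWi V hV (hVsub.trans hsub)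
        have h2 : IsOpen (f '' (f^[k] '' V)) := hopen _ him h1
        have : f '' (f^[k] '' V) = f^[k + 1] '' V := by
          rw [← image_comp]
          simp [Function.iterate_succ_apply']
        rwa [this] at h2
  apply le_antisymm
  · apply closure_minimal _ isClosed_closure
    apply iUnion_subset
    intro k x hx
    obtain ⟨hx1, hx2⟩ := hx
    have hxW : x ∈ W k := hx1
    obtain ⟨hWo, hWc, hWi⟩ := key k
    rw [mem_closure_iff]
    intro V hV hxV
    have hV' : IsOpen (V ∩ W k) := hV.inter hWo
    have him : IsOpen (f^[k] '' (V ∩ W k)) := hWi _ hV' inter_subset_right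
    have hmem : f^[k] x ∈ f^[k] '' (V ∩ W k) := mem_image_of_mem _ ⟨hxV, hxW⟩
    have := (mem_closure_iff.mp (hdense hx2)) _ him hmem
    obtain ⟨z, ⟨y, ⟨hyV, hyW⟩, hyz⟩, hzI⟩ := this
    refine ⟨y, hyV, ?_⟩
    exact mem_iUnion.mpr ⟨k, hyW, hyz ▸ hzI⟩
  · apply closure_mono
    apply iUnion_mono
    intro k x hx
    exact ⟨hx.1, hIS hx.2⟩
end

section
/- Let X be a compact metric space and f : Ω → X as above, satisfying the Montel-type property with constant q. If A ⊆ X is a finite set with more than q elements such that f^{-1}(A) = A and A is contained in the Fatou set F(f), and J(f) is nonempty, then a contradiction ensues; hence any completely invariant finite set of more than q points contained in F(f) forces J(f) = ∅. Equivalently, if J(f) ≠ ∅ then the exceptional set E(f) has at most q points. -/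
open Set Filter Topology

/-- given the Montel-type property (each point of `J(f)` lies in the
closure of the grand backward orbit of every point except at most `q` of them), a
completely invariant finite set `A` with more than `q` elements contained in the
Fatou set `F(f)` is incompatible with `J(f) ≠ ∅`. -/
theorem stmt12 {X : Type*} [MetricSpace X]
    (f : X → X) (q : ℕ) (F J : Set X) (hJ : J = Fᶜ)
    (hMontel : ∀ x ∈ J, ∃ Q : Set X, Q.Finite ∧ Q.ncard ≤ q ∧
      ∀ y ∉ Q, x ∈ closure (⋃ k : ℕ, f^[k + 1] ⁻¹' {y}))
    (A : Set X) (hAfin : A.Finite) (hAq : q < A.ncard)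
    (hAinv : f ⁻¹' A = A) (hAF : A ⊆ F) (hJne : J.Nonempty) :
    False := by
  obtain ⟨x, hx⟩ := hJne
  obtain ⟨Q, hQfin, hQcard, hQ⟩ := hMontel x hx
  have hiter : ∀ k : ℕ, f^[k] ⁻¹' A = A := by
    intro k
    induction k with
    | zero => simp
    | succ n ih =>
      rw [Function.iterate_succ', Set.preimage_comp, hAinv, ih]
  have hnsub : ¬ A ⊆ Q := fun h => absurd (Set.ncard_le_ncard h hQfin) (by omega)
  obtain ⟨a, haA, haQ⟩ := Set.not_subset.mp hnsub
  have hxA : x ∈ A := by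
    have := hQ a haQ
    have hsub : (⋃ k : ℕ, f^[k + 1] ⁻¹' {a}) ⊆ A := by
      refine Set.iUnion_subset fun k => ?_
      have : f^[k + 1] ⁻¹' {a} ⊆ f^[k + 1] ⁻¹' A :=
        Set.preimage_mono (Set.singleton_subset_iff.mpr haA)
      rwa [hiter (k + 1)] at this
    have hclosed : IsClosed A := hAfin.isClosed
    exact hclosed.closure_subset_iff.mpr hsub this
  rw [hJ] at hx
  exact hx (hAF hxA)
end
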